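/- Fix n ≥ 1 and reals a ∈ [0,1), b, with the Spike setup: s_n w = (n:ℝ)^b on the window |(w:ℝ) - n/4| ≤ (n:ℝ)^a/2 and 0 otherwise, c_n(z) = |z| + s_n(|z|), C_n the diagonal cost matrix, B'_n the mixer sum, u_n the uniform vector, and ψ_f = (Matrix.exp (I·(π/4)·B'_n) * Matrix.exp (-I·(π/2)·C_n)).mulVec u_n. Let q = (2:ℝ)^(-(n:ℝ)+2) · (Real.sin (π·(n:ℝ)^b/4))² · ∑_{w ∈ Finset.range (n+1), |(w:ℝ) - n/4| ≤ (n:ℝ)^a/2} Nat.choose n w. If q ≤ 1, then ‖ψ_f 0‖² ≥ (1 - Real.sqrt q)². -/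

import Mathlib

/-!
On the ramp `c(z) = |z|` alone, the phase separator at `γ = π/2` multiplies `|z⟩` by `(-i)^|z|`,
turning `|+⟩^⊗n` into the product state `⊗ (|0⟩ - i|1⟩)/√2`. The mixer factors into the commuting
gates `exp (iπ/4 X_j) = (1 + i X_j)/√2`, each of which sends `(|0⟩ - i|1⟩)/√2` to `|0⟩`, so the ramp
alone reaches the all-false string with amplitude `1`. The spike changes the phased state by a
vector `δ` with `‖δ‖² = q`; since the mixer is unitary, the final amplitude at the all-false
string is `1 + ε` with `|ε| ≤ ‖δ‖ = √q`.
-/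

open Matrix Complex

/-- The bit-flip (Pauli X on qubit `i`) matrix on `n`-bit strings. -/
noncomputable def pauliX (n : ℕ) (i : Fin n) :
    Matrix (Fin n → Bool) (Fin n → Bool) ℂ :=
  Matrix.of fun z z' => if z' = Function.update z i (!(z i)) then 1 else 0

def hammingWeight {n : ℕ} (z : Fin n → Bool) : ℕ :=
  (Finset.univ.filter fun i => z i = true).card

noncomputable def spike (a b : ℝ) (n : ℕ) (w : ℕ) : ℝ :=
  if |(w : ℝ) - (n : ℝ) / 4| ≤ (n : ℝ) ^ a / 2 then (n : ℝ) ^ b else 0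

section PauliX

variable {n : ℕ}

lemma pauliX_mulVec (i : Fin n) (v : (Fin n → Bool) → ℂ) :
    pauliX n i *ᵥ v = fun z => v (Function.update z i (!z i)) := by
  funext z
  simp [pauliX, mulVec, dotProduct]

lemma pauliX_mul_self (i : Fin n) : pauliX n i * pauliX n i = 1 := by
  refine ext_iff_mulVec.2 fun v => ?_
  funext z
  simp [← mulVec_mulVec, pauliX_mulVec]

lemma pauliX_commute (i j : Fin n) : Commute (pauliX n i) (pauliX n j) := by
  refine ext_iff_mulVec.2 fun v => ?_
  funext z
  rcases eq_or_ne i j with rfl | hij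
  · rfl
  · simp [← mulVec_mulVec, pauliX_mulVec, Function.update_of_ne hij, Function.update_of_ne hij.symm,
      Function.update_comm hij]

lemma pauliX_isHermitian (i : Fin n) : (pauliX n i).IsHermitian := by
  ext z z'
  have hflip : z = Function.update z' i (!z' i) ↔ z' = Function.update z i (!z i) := by
    constructor <;> rintro rfl <;> simp
  simp [pauliX, hflip]

end PauliX

lemma exp_smul_of_mul_self_eq_one {𝔸 : Type*} [NormedRing 𝔸] [NormedAlgebra ℂ 𝔸] [CompleteSpace 𝔸]
    {A : 𝔸} (hA : A * A = 1) (c : ℂ) :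
    NormedSpace.exp (c • A) = cosh c • (1 : 𝔸) + sinh c • A := by
  have hpow : ∀ k : ℕ, A ^ (2 * k) = 1 := fun k => by rw [pow_mul, sq, hA, one_pow]
  refine (NormedSpace.exp_series_hasSum_exp' (𝕂 := ℂ) (c • A)).unique (HasSum.even_add_odd ?_ ?_)
  · convert (hasSum_cosh c).smul_const (1 : 𝔸) using 2 with k
    rw [smul_pow, hpow, smul_smul, div_eq_inv_mul]
  · convert (hasSum_sinh c).smul_const A using 2 with k
    rw [smul_pow, pow_succ A, hpow, one_mul, smul_smul, div_eq_inv_mul]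

lemma Matrix.IsHermitian.exp_I_mul_smul_mem_unitaryGroup {m : Type*} [Fintype m] [DecidableEq m]
    {B : Matrix m m ℂ} (hB : B.IsHermitian) (t : ℝ) :
    NormedSpace.exp ((I * t) • B) ∈ unitaryGroup m ℂ := by
  have hstar : ((I * t) • B)ᴴ = -((I * t) • B) := by
    rw [conjTranspose_smul, hB.eq, star_mul', Complex.star_def, conj_I, conj_ofReal, neg_mul,
      neg_smul]
  rw [mem_unitaryGroup_iff', star_eq_conjTranspose, ← Matrix.exp_conjTranspose, hstar,
    ← Matrix.exp_add_of_commute _ _ ((Commute.refl ((I * t) • B)).neg_left), neg_add_cancel,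
    NormedSpace.exp_zero]

lemma exp_smul_diagonal {m : Type*} [Fintype m] [DecidableEq m] (c : ℂ) (d : m → ℂ) :
    NormedSpace.exp (c • diagonal d) = diagonal fun x => exp (c * d x) := by
  rw [← diagonal_smul, Matrix.exp_diagonal]
  congr 1
  funext x
  simp [exp_eq_exp_ℂ]

/-- `exp (iπ/4 X_i)`, since `cos (π/4) = sin (π/4) = √2/2`. -/
noncomputable def mixerGate (n : ℕ) (i : Fin n) : Matrix (Fin n → Bool) (Fin n → Bool) ℂ :=
  ((√2 / 2 : ℝ) : ℂ) • (1 + I • pauliX n i)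

lemma mixerGate_commute {n : ℕ} (i j : Fin n) : Commute (mixerGate n i) (mixerGate n j) := by
  refine ((Commute.add_left ?_ ?_).smul_left _).smul_right _
  · exact (Commute.one_left _).add_right ((Commute.one_left _).smul_right _)
  · exact (Commute.one_right _).add_right (((pauliX_commute i j).smul_left _).smul_right _)

lemma mixerGate_pairwise_commute {n : ℕ} (s : Set (Fin n)) :
    s.Pairwise (Function.onFun Commute (mixerGate n)) :=
  fun i _ j _ _ => mixerGate_commute i j

noncomputable def mixer (n : ℕ) : Matrix (Fin n → Bool) (Fin n → Bool) ℂ :=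
  NormedSpace.exp ((I * ((Real.pi : ℂ) / 4)) • ∑ i, pauliX n i)

section Mixer

variable {n : ℕ}

attribute [local instance] Matrix.linftyOpNormedAddCommGroup Matrix.linftyOpNormedRing
  Matrix.linftyOpNormedAlgebra in
lemma exp_pauliX_eq_mixerGate (i : Fin n) :
    NormedSpace.exp ((I * ((Real.pi : ℂ) / 4)) • pauliX n i) = mixerGate n i := by
  refine (exp_smul_of_mul_self_eq_one (pauliX_mul_self i) _).trans ?_
  rw [mul_comm, show (Real.pi : ℂ) / 4 = ((Real.pi / 4 : ℝ) : ℂ) by push_cast; ring, cosh_mul_I,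
    sinh_mul_I, ← ofReal_cos, ← ofReal_sin, Real.cos_pi_div_four, Real.sin_pi_div_four, mixerGate,
    smul_add, smul_smul]

lemma mixer_eq_noncommProd :
    mixer n = Finset.univ.noncommProd (mixerGate n) (mixerGate_pairwise_commute _) := by
  rw [mixer, Finset.smul_sum, Matrix.exp_sum_of_commute _ _
    fun i _ j _ _ => ((pauliX_commute i j).smul_left _).smul_right _]
  exact Finset.noncommProd_congr rfl (fun i _ => exp_pauliX_eq_mixerGate i) _

end Mixer

lemma mixer_mem_unitaryGroup (n : ℕ) : mixer n ∈ unitaryGroup (Fin n → Bool) ℂ := by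
  have hB : (∑ i, pauliX n i).IsHermitian :=
    isSelfAdjoint_sum _ fun i _ => pauliX_isHermitian i
  simpa [mixer, div_eq_mul_inv] using hB.exp_I_mul_smul_mem_unitaryGroup (Real.pi / 4)

section ProductState

variable {n : ℕ}

def productState (φ : Fin n → Bool → ℂ) : (Fin n → Bool) → ℂ :=
  fun z => ∏ j, φ j (z j)

/-- The single-qubit action of `mixerGate`. -/
noncomputable def qubitMix (ψ : Bool → ℂ) : Bool → ℂ :=
  fun b => ((√2 / 2 : ℝ) : ℂ) * (ψ b + I * ψ (!b))

lemma productState_update_apply (φ : Fin n → Bool → ℂ) (i : Fin n) (ψ : Bool → ℂ)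
    (z : Fin n → Bool) :
    productState (Function.update φ i ψ) z = ψ (z i) * ∏ j ∈ Finset.univ.erase i, φ j (z j) := by
  rw [productState, ← Finset.mul_prod_erase _ _ (Finset.mem_univ i), Function.update_self]
  congr 1
  refine Finset.prod_congr rfl fun j hj => ?_
  rw [Function.update_of_ne (Finset.ne_of_mem_erase hj)]

lemma mixerGate_mulVec_productState (φ : Fin n → Bool → ℂ) (i : Fin n) :
    mixerGate n i *ᵥ productState φ = productState (Function.update φ i (qubitMix (φ i))) := by
  funext z
  have hflip : ∏ j ∈ Finset.univ.erase i, φ j (Function.update z i (!z i) j) =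
      ∏ j ∈ Finset.univ.erase i, φ j (z j) :=
    Finset.prod_congr rfl fun j hj => by rw [Function.update_of_ne (Finset.ne_of_mem_erase hj)]
  have hφ := productState_update_apply φ i (φ i)
  rw [Function.update_eq_self] at hφ
  simp only [mixerGate, smul_mulVec, add_mulVec, one_mulVec, pauliX_mulVec, Pi.smul_apply,
    Pi.add_apply, smul_eq_mul, hφ, productState_update_apply, Function.update_self, hflip,
    qubitMix]
  ring

lemma noncommProd_mixerGate_mulVec_productState (φ : Fin n → Bool → ℂ) (s : Finset (Fin n)) :
    s.noncommProd (mixerGate n) (mixerGate_pairwise_commute _) *ᵥ productState φ =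
      productState fun j => if j ∈ s then qubitMix (φ j) else φ j := by
  induction s using Finset.induction_on with
  | empty => simp
  | @insert a s ha ih =>
    rw [Finset.noncommProd_insert_of_notMem _ _ _ _ ha, ← mulVec_mulVec, ih,
      mixerGate_mulVec_productState, if_neg ha]
    congr 1
    funext j
    by_cases hj : j = a
    · subst hj; simp
    · simp [hj]

end ProductState

lemma sqrt_two_div_two_pow (n : ℕ) : (√2 / 2 : ℝ) ^ n = (2 : ℝ) ^ (-(n : ℝ) / 2) := by
  rw [show -(n : ℝ) / 2 = -(1 / 2) * n by ring, Real.rpow_mul_natCast zero_le_two,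
    Real.rpow_neg zero_le_two, ← Real.sqrt_eq_rpow, Real.sqrt_div_self', one_div]

lemma norm_sq_two_rpow_neg_div_two (n : ℕ) :
    ‖(((2 : ℝ) ^ (-(n : ℝ) / 2) : ℝ) : ℂ)‖ ^ 2 = (2 ^ n)⁻¹ := by
  rw [norm_real, Real.norm_of_nonneg (by positivity), ← Real.rpow_mul_natCast zero_le_two,
    show -(n : ℝ) / 2 * (2 : ℕ) = -n by push_cast; ring, Real.rpow_neg zero_le_two,
    Real.rpow_natCast]

lemma exp_neg_I_pi_div_two_mul_natCast (k : ℕ) :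
    exp (-I * ((Real.pi : ℂ) / 2) * k) = (-I) ^ k := by
  rw [mul_comm, exp_nat_mul, show -I * ((Real.pi : ℂ) / 2) = ((-(Real.pi / 2) : ℝ) : ℂ) * I by
    push_cast; ring, exp_mul_I, ← ofReal_cos, ← ofReal_sin, Real.cos_neg, Real.sin_neg,
    Real.cos_pi_div_two, Real.sin_pi_div_two]
  simp

lemma norm_sq_exp_neg_I_pi_div_two_mul_add_sub (k t : ℝ) :
    ‖exp (-I * ((Real.pi : ℂ) / 2) * ((k + t : ℝ) : ℂ)) - exp (-I * ((Real.pi : ℂ) / 2) * k)‖ ^ 2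
      = 4 * Real.sin (Real.pi * t / 4) ^ 2 := by
  have hk : ‖exp (-I * ((Real.pi : ℂ) / 2) * k)‖ = 1 := by
    rw [show -I * ((Real.pi : ℂ) / 2) * k = ((-(Real.pi / 2 * k)) : ℝ) * I by push_cast; ring,
      norm_exp_ofReal_mul_I]
  rw [ofReal_add, mul_add, exp_add, ← mul_sub_one, norm_mul, hk, one_mul,
    show -I * ((Real.pi : ℂ) / 2) * t = I * ((-(Real.pi / 2 * t)) : ℝ) by push_cast; ring,
    norm_exp_I_mul_ofReal_sub_one, Real.norm_eq_abs, sq_abs,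
    show -(Real.pi / 2 * t) / 2 = -(Real.pi * t / 4) by ring, Real.sin_neg]
  ring

/-- The single-qubit factor of the ramp phase `(-i)^|z|` applied to `|+⟩^⊗n`. -/
noncomputable def rampQubit : Bool → ℂ :=
  fun b => ((√2 / 2 : ℝ) : ℂ) * if b then -I else 1

noncomputable def rampState (n : ℕ) : (Fin n → Bool) → ℂ :=
  productState fun _ => rampQubit

lemma qubitMix_rampQubit : qubitMix rampQubit = fun b => if b then 0 else 1 := by
  have hsq : ((√2 / 2 : ℝ) : ℂ) * ((√2 / 2 : ℝ) : ℂ) = 1 / 2 := by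
    rw [← ofReal_mul, div_mul_div_comm, Real.mul_self_sqrt zero_le_two]
    norm_num
  funext b
  cases b
  · simp only [qubitMix, rampQubit, Bool.not_false, Bool.false_eq_true, ↓reduceIte]
    linear_combination (2 : ℂ) * hsq - ((√2 / 2 : ℝ) : ℂ) ^ 2 * I_mul_I
  · simp only [qubitMix, rampQubit, Bool.not_true, Bool.false_eq_true, ↓reduceIte]
    ring

lemma rampState_apply {n : ℕ} (z : Fin n → Bool) :
    rampState n z =
      exp (-I * ((Real.pi : ℂ) / 2) * hammingWeight z) * (((2 : ℝ) ^ (-(n : ℝ) / 2) : ℝ) : ℂ) := by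
  simp only [rampState, productState, rampQubit]
  rw [Finset.prod_mul_distrib, Finset.prod_const, Finset.card_univ, Fintype.card_fin,
    Finset.prod_ite, Finset.prod_const, Finset.prod_const_one, mul_one,
    exp_neg_I_pi_div_two_mul_natCast, ← sqrt_two_div_two_pow, ofReal_pow, mul_comm]
  rfl

lemma mixer_mulVec_rampState_apply_false (n : ℕ) :
    (mixer n *ᵥ rampState n) (fun _ => false) = 1 := by
  rw [mixer_eq_noncommProd, rampState, noncommProd_mixerGate_mulVec_productState]
  simp [productState, qubitMix_rampQubit]

lemma sum_comp_hammingWeight {M : Type*} [AddCommMonoid M] (n : ℕ) (g : ℕ → M) :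
    ∑ z : Fin n → Bool, g (hammingWeight z) = ∑ w ∈ Finset.range (n + 1), n.choose w • g w := by
  let e : Finset (Fin n) ≃ (Fin n → Bool) :=
    { toFun := fun S i => decide (i ∈ S)
      invFun := fun z => Finset.univ.filter fun i => z i = true
      left_inv := fun S => by ext i; simp
      right_inv := fun z => by funext i; simp }
  have hcard : ∀ S, hammingWeight (e S) = S.card := fun S => by
    simp [hammingWeight, e]
  rw [← e.sum_comp, Finset.sum_congr rfl fun S _ => congrArg g (hcard S), ← Finset.powerset_univ,
    Finset.sum_powerset_apply_card, Finset.card_univ, Fintype.card_fin]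

/-- The weak-overlap quantity `q` of Lemma 1, at phase angle `γ = π/2`. -/
noncomputable def weakOverlap (n : ℕ) (s : ℕ → ℝ) : ℝ :=
  ∑ w ∈ Finset.range (n + 1), 4 * (2 ^ n)⁻¹ * n.choose w * Real.sin (Real.pi * s w / 4) ^ 2

noncomputable def uniformState (n : ℕ) : (Fin n → Bool) → ℂ :=
  fun _ => (((2 : ℝ) ^ (-(n : ℝ) / 2) : ℝ) : ℂ)

noncomputable def phaseSeparator (n : ℕ) (c : (Fin n → Bool) → ℝ) :
    Matrix (Fin n → Bool) (Fin n → Bool) ℂ :=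
  NormedSpace.exp ((-I * ((Real.pi : ℂ) / 2)) • diagonal fun z => (c z : ℂ))

lemma sum_norm_sq_phaseSeparator_mulVec_sub_rampState (n : ℕ) (s : ℕ → ℝ) :
    ∑ z, ‖(phaseSeparator n (fun z => hammingWeight z + s (hammingWeight z)) *ᵥ uniformState n -
      rampState n) z‖ ^ 2 = weakOverlap n s := by
  have hz : ∀ z, ‖(phaseSeparator n (fun z => hammingWeight z + s (hammingWeight z)) *ᵥ
      uniformState n - rampState n) z‖ ^ 2 =
        4 * (2 ^ n)⁻¹ * Real.sin (Real.pi * s (hammingWeight z) / 4) ^ 2 := fun z => by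
    rw [phaseSeparator, exp_smul_diagonal, Pi.sub_apply, mulVec_diagonal, rampState_apply,
      uniformState, ← sub_mul, norm_mul, mul_pow, ← ofReal_natCast,
      norm_sq_exp_neg_I_pi_div_two_mul_add_sub, norm_sq_two_rpow_neg_div_two]
    ring
  simp only [hz]
  rw [sum_comp_hammingWeight n fun w => 4 * (2 ^ n)⁻¹ * Real.sin (Real.pi * s w / 4) ^ 2]
  simp only [weakOverlap, nsmul_eq_mul]
  exact Finset.sum_congr rfl fun w _ => by ring

lemma sum_norm_sq_mulVec_of_mem_unitaryGroup {m : Type*} [Fintype m] [DecidableEq m]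
    {U : Matrix m m ℂ} (hU : U ∈ unitaryGroup m ℂ) (v : m → ℂ) :
    ∑ x, ‖(U *ᵥ v) x‖ ^ 2 = ∑ x, ‖v x‖ ^ 2 := by
  have hdot : ∀ w : m → ℂ, star w ⬝ᵥ w = ((∑ x, ‖w x‖ ^ 2 : ℝ) : ℂ) := fun w => by
    simp only [dotProduct, ofReal_sum, Pi.star_apply, ← normSq_eq_norm_sq, normSq_eq_conj_mul_self]
    rfl
  have key : star (U *ᵥ v) ⬝ᵥ (U *ᵥ v) = star v ⬝ᵥ v := by
    rw [star_mulVec, ← dotProduct_mulVec, mulVec_mulVec, ← star_eq_conjTranspose,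
      (mem_unitaryGroup_iff').1 hU, one_mulVec]
  rw [hdot, hdot] at key
  exact_mod_cast key

lemma norm_sq_mulVec_apply_le_of_mem_unitaryGroup {m : Type*} [Fintype m] [DecidableEq m]
    {U : Matrix m m ℂ} (hU : U ∈ unitaryGroup m ℂ) (v : m → ℂ) (x : m) :
    ‖(U *ᵥ v) x‖ ^ 2 ≤ ∑ y, ‖v y‖ ^ 2 :=
  sum_norm_sq_mulVec_of_mem_unitaryGroup hU v ▸
    Finset.single_le_sum (f := fun y => ‖(U *ᵥ v) y‖ ^ 2) (fun _ _ => by positivity)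
      (Finset.mem_univ x)

lemma one_sub_sqrt_sq_le_norm_one_add_sq {y : ℂ} {q : ℝ} (hy : ‖y‖ ^ 2 ≤ q) (hq : q ≤ 1) :
    (1 - √q) ^ 2 ≤ ‖1 + y‖ ^ 2 := by
  have hy' : ‖y‖ ≤ √q := Real.le_sqrt_of_sq_le hy
  have hq' : √q ≤ 1 := Real.sqrt_le_one.2 hq
  have htri : 1 - ‖y‖ ≤ ‖1 + y‖ := by
    simpa using norm_sub_norm_le (1 : ℂ) (-y)
  exact pow_le_pow_left₀ (by linarith) (by linarith) 2

theorem qaoa1_success_ge_of_weakOverlap_le_one (n : ℕ) (s : ℕ → ℝ) (hq : weakOverlap n s ≤ 1) :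
    (1 - √(weakOverlap n s)) ^ 2 ≤ ‖((mixer n * phaseSeparator n
      (fun z => hammingWeight z + s (hammingWeight z))) *ᵥ uniformState n) (fun _ => false)‖ ^ 2 := by
  set δ := phaseSeparator n (fun z => hammingWeight z + s (hammingWeight z)) *ᵥ uniformState n -
    rampState n
  have hψ : ((mixer n * phaseSeparator n (fun z => hammingWeight z + s (hammingWeight z))) *ᵥ
      uniformState n) (fun _ => false) = 1 + (mixer n *ᵥ δ) (fun _ => false) := by
    rw [← mulVec_mulVec, mulVec_sub, Pi.sub_apply, mixer_mulVec_rampState_apply_false]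
    ring
  rw [hψ]
  exact one_sub_sqrt_sq_le_norm_one_add_sq
    ((norm_sq_mulVec_apply_le_of_mem_unitaryGroup (mixer_mem_unitaryGroup n) δ _).trans
      (sum_norm_sq_phaseSeparator_mulVec_sub_rampState n s).le) hq

lemma weakOverlap_spike (n : ℕ) (a b : ℝ) :
    weakOverlap n (spike a b n) =
      (2 : ℝ) ^ (-(n : ℝ) + 2) * Real.sin (Real.pi * (n : ℝ) ^ b / 4) ^ 2 *
        ∑ w ∈ (Finset.range (n + 1)).filter
            (fun w : ℕ => |(w : ℝ) - (n : ℝ) / 4| ≤ (n : ℝ) ^ a / 2), (Nat.choose n w : ℝ) := by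
  have h2 : (2 : ℝ) ^ (-(n : ℝ) + 2) = 4 * (2 ^ n)⁻¹ := by
    rw [Real.rpow_add two_pos, Real.rpow_neg zero_le_two, Real.rpow_natCast, Real.rpow_two]
    ring
  rw [weakOverlap, Finset.sum_filter, Finset.mul_sum, h2]
  refine Finset.sum_congr rfl fun w _ => ?_
  unfold spike
  split_ifs <;> simp [mul_right_comm]

theorem qaoa1_spike_quantitative_general (n : ℕ)
    (a b : ℝ)
    (B' C : Matrix (Fin n → Bool) (Fin n → Bool) ℂ)
    (hB' : B' = ∑ i, pauliX n i)
    (hC : C = Matrix.diagonal fun z =>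
      (((hammingWeight z : ℝ) + spike a b n (hammingWeight z) : ℝ) : ℂ))
    (u : (Fin n → Bool) → ℂ)
    (hu : u = fun _ => (((2 : ℝ) ^ (-(n : ℝ) / 2) : ℝ) : ℂ))
    (ψf : (Fin n → Bool) → ℂ)
    (hψf : ψf = (NormedSpace.exp ((Complex.I * ((Real.pi : ℂ) / 4)) • B') *
        NormedSpace.exp ((-Complex.I * ((Real.pi : ℂ) / 2)) • C)).mulVec u)
    (q : ℝ)
    (hq : q = (2 : ℝ) ^ (-(n : ℝ) + 2) * Real.sin (Real.pi * (n : ℝ) ^ b / 4) ^ 2 *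
        ∑ w ∈ (Finset.range (n + 1)).filter
            (fun w : ℕ => |(w : ℝ) - (n : ℝ) / 4| ≤ (n : ℝ) ^ a / 2),
          (Nat.choose n w : ℝ))
    (hq1 : q ≤ 1) :
    ‖ψf (fun _ => false)‖ ^ 2 ≥ (1 - Real.sqrt q) ^ 2 := by
  subst hB' hC hu hψf hq
  rw [← weakOverlap_spike] at hq1 ⊢
  exact qaoa1_success_ge_of_weakOverlap_le_one n (spike a b n) hq1

/-- Finite-`n` quantitative Spike bound: the success probability of QAOA1
with angles `(π/4, π/2)` at the global minimum is at least `(1 − √q)²`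
where `q` is the weak-overlap quantity of the spike. -/
theorem qaoa1_spike_quantitative (n : ℕ) (hn : 1 ≤ n)
    (a b : ℝ) (ha₀ : 0 ≤ a) (ha₁ : a < 1)
    (B' C : Matrix (Fin n → Bool) (Fin n → Bool) ℂ)
    (hB' : B' = ∑ i, pauliX n i)
    (hC : C = Matrix.diagonal fun z =>
      (((hammingWeight z : ℝ) + spike a b n (hammingWeight z) : ℝ) : ℂ))
    (u : (Fin n → Bool) → ℂ)
    (hu : u = fun _ => (((2 : ℝ) ^ (-(n : ℝ) / 2) : ℝ) : ℂ))
    (ψf : (Fin n → Bool) → ℂ)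
    (hψf : ψf = (NormedSpace.exp ((Complex.I * ((Real.pi : ℂ) / 4)) • B') *
        NormedSpace.exp ((-Complex.I * ((Real.pi : ℂ) / 2)) • C)).mulVec u)
    (q : ℝ)
    (hq : q = (2 : ℝ) ^ (-(n : ℝ) + 2) * Real.sin (Real.pi * (n : ℝ) ^ b / 4) ^ 2 *
        ∑ w ∈ (Finset.range (n + 1)).filter
            (fun w : ℕ => |(w : ℝ) - (n : ℝ) / 4| ≤ (n : ℝ) ^ a / 2),
          (Nat.choose n w : ℝ))
    (hq1 : q ≤ 1) :
    ‖ψf (fun _ => false)‖ ^ 2 ≥ (1 - Real.sqrt q) ^ 2 :=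
  qaoa1_spike_quantitative_general n a b B' C hB' hC u hu ψf hψf q hq hq1
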